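/- arXiv:2103.01113 — 7 statements merged into one kernel-verified Lean document; each statement's English description precedes it below -/
import Mathlib

section
/- Let $(\alpha_i)$, $(\beta_i)$, $(\gamma_i)$ and $(a_i)$ be sequences of nonnegative real numbers such that $a_{i+1} \leq \alpha_i + \beta_i(a_0 + a_1 + \cdots + a_{i-1}) + (1+\gamma_i)a_i$ for all $i \in \mathbb{N}$. Then for every $j \geq 1$, $a_j \leq \big(a_0 + \sum_{k=0}^{j-1}\alpha_k\big)\exp\big(\sum_{k=0}^{j-1}(k\beta_k + \gamma_k)\big)$. -/
/-!
Bound the history term by the running maximum `M i = max (a 0, …, a i)`: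
`β i * ∑ k < i, a k ≤ i * β i * M i`, so `M` satisfies the memoryless recursion
`M (i + 1) ≤ (1 + (i * β i + γ i)) * M i + α i`, to which the classical discrete Grönwall
inequality applies; finally `a j ≤ M j`.
-/

open Finset

namespace GronwallPaper

theorem sum_range_le_card_nsmul_partialSups {M : Type*} [AddCommMonoid M] [Lattice M]
    [IsOrderedAddMonoid M] (a : ℕ → M) (n : ℕ) :
    ∑ k ∈ range n, a k ≤ n • partialSups a n := by
  simpa using sum_le_card_nsmul (range n) a (partialSups a n)
    fun k hk ↦ le_partialSups_of_le a (mem_range.mp hk).le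

theorem partialSups_succ_le_of_le_sum {α β γ a : ℕ → ℝ}
    (hα : ∀ i, 0 ≤ α i) (hβ : ∀ i, 0 ≤ β i) (hγ : ∀ i, 0 ≤ γ i) (ha₀ : 0 ≤ a 0)
    (hrec : ∀ i : ℕ, a (i + 1) ≤ α i + β i * (∑ k ∈ range i, a k) + (1 + γ i) * a i) (n : ℕ) :
    partialSups a (n + 1) ≤ (1 + (n * β n + γ n)) * partialSups a n + α n := by
  set M := partialSups a
  have hM : 0 ≤ M n := ha₀.trans (le_partialSups_of_le a (Nat.zero_le n))
  have hnext : a (n + 1) ≤ (1 + (n * β n + γ n)) * M n + α n :=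
    calc a (n + 1)
      _ ≤ α n + β n * (∑ k ∈ range n, a k) + (1 + γ n) * a n := hrec n
      _ ≤ α n + β n * (n * M n) + (1 + γ n) * M n := by
          have := hβ n
          have := hγ n
          gcongr
          · simpa using sum_range_le_card_nsmul_partialSups a n
          · exact le_partialSups a n
      _ = (1 + (n * β n + γ n)) * M n + α n := by ring
  have hprev : M n ≤ (1 + (n * β n + γ n)) * M n + α n := by
    have : 0 ≤ (n * β n + γ n) * M n := by have := hβ n; have := hγ n; positivity
    linarith [hα n]
  refine partialSups_le a (n + 1) _ fun j hj ↦ ?_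
  rcases Nat.le_succ_iff.mp hj with hj | rfl
  · exact (le_partialSups_of_le a hj).trans hprev
  · exact hnext

/-- Discrete Gronwall-type inequality (Lemma 2.5). -/
theorem discrete_gronwall (α β γ a : ℕ → ℝ)
    (hα : ∀ i, 0 ≤ α i) (hβ : ∀ i, 0 ≤ β i) (hγ : ∀ i, 0 ≤ γ i) (ha : ∀ i, 0 ≤ a i)
    (hrec : ∀ i : ℕ, a (i + 1) ≤ α i + β i * (∑ k ∈ range i, a k) + (1 + γ i) * a i) :
    ∀ j : ℕ, 1 ≤ j →
      a j ≤ (a 0 + ∑ k ∈ range j, α k) *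
        Real.exp (∑ k ∈ range j, ((k : ℝ) * β k + γ k)) := by
  intro j _
  have hM := _root_.discrete_gronwall (u := partialSups a) (n₀ := 0)
    (by simpa using ha 0)
    (fun n _ ↦ partialSups_succ_le_of_le_sum hα hβ hγ (ha 0) hrec n)
    (fun n _ ↦ by have := hβ n; have := hγ n; positivity)
    (fun n _ ↦ hα n) (Nat.zero_le j)
  rw [partialSups_zero, ← range_eq_Ico] at hM
  exact (le_partialSups a j).trans hM

end GronwallPaper
end

section
/- Let $m : [0,T] \to [0,\infty)$ be Lebesgue integrable and let $x : [0,T] \to [0,\infty)$ be a function such that for every $t \in [0,T]$, $\tfrac{1}{2}x(t)^2 \leq \tfrac{1}{2}a^2 + \int_{(0,t]} m(s)x(s)\,ds$ where $a \geq 0$ and $x$ is bounded (e.g. of bounded variation). Then for every $t \in [0,T]$, $x(t) \leq a + \int_{(0,t]} m(s)\,ds$. -/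
/-!
For `b > a ≥ 0` put `u t = √(b² + 2 ∫₀ᵗ m x)`. The radicand is an absolutely continuous function
bounded below by `b² - a² > 0`, so `u` is absolutely continuous, and the hypothesis says `x ≤ u`.
Hence a.e. `u' = m x / u ≤ m`, and integrating gives `x t ≤ u t ≤ b + ∫₀ᵗ m`; let `b ↓ a`.
-/

open MeasureTheory Set Filter

theorem LipschitzOnWith.comp_absolutelyContinuousOnInterval {X Y : Type*}
    [PseudoMetricSpace X] [PseudoMetricSpace Y] {f : ℝ → X} {g : X → Y} {K : NNReal}
    {s : Set X} {a b : ℝ} (hg : LipschitzOnWith K g s)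
    (hf : AbsolutelyContinuousOnInterval f a b) (hfs : MapsTo f (uIcc a b) s) :
    AbsolutelyContinuousOnInterval (g ∘ f) a b := by
  refine squeeze_zero' (Eventually.of_forall fun _ => Finset.sum_nonneg fun _ _ => dist_nonneg)
    ?_ (by simpa using Tendsto.const_mul (K : ℝ) hf)
  filter_upwards [mem_inf_of_right (mem_principal_self _)] with E hE
  rw [Finset.mul_sum]
  exact Finset.sum_le_sum fun i hi =>
    hg.dist_le_mul _ (hfs (hE.1 i hi).1) _ (hfs (hE.1 i hi).2)

theorem AbsolutelyContinuousOnInterval.sqrt {f : ℝ → ℝ} {a b c : ℝ}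
    (hf : AbsolutelyContinuousOnInterval f a b) (hc : 0 < c) (hfc : ∀ x ∈ uIcc a b, c ≤ f x) :
    AbsolutelyContinuousOnInterval (fun x => √(f x)) a b := by
  obtain ⟨C, hC⟩ := hf.exists_bound
  obtain ⟨K, hK⟩ := ((contDiffOn_id (n := 1) (s := Icc c C)).sqrt
    fun y hy => (hc.trans_le hy.1).ne').exists_lipschitzOnWith one_ne_zero (convex_Icc c C)
      isCompact_Icc
  exact hK.comp_absolutelyContinuousOnInterval hf fun x hx =>
    ⟨hfc x hx, (le_abs_self _).trans (hC x hx)⟩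

theorem AbsolutelyContinuousOnInterval.sub_le_integral_of_ae_deriv_le {f g : ℝ → ℝ} {a b : ℝ}
    (hab : a ≤ b) (hf : AbsolutelyContinuousOnInterval f a b)
    (hg : IntervalIntegrable g volume a b) (h : ∀ᵐ x, x ∈ uIcc a b → deriv f x ≤ g x) :
    f b - f a ≤ ∫ x in a..b, g x := by
  rw [← hf.integral_deriv_eq_sub]
  refine intervalIntegral.integral_mono_ae_restrict hab hf.intervalIntegrable_deriv hg ?_
  rw [uIcc_of_le hab] at h
  exact (ae_restrict_iff' measurableSet_Icc).2 h

theorem le_add_integral_of_sq_le_of_lt {m x : ℝ → ℝ} {a b t : ℝ} (ha : 0 ≤ a) (hab : a < b)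
    (ht : 0 ≤ t) (hm : IntervalIntegrable m volume 0 t)
    (hmx : IntervalIntegrable (fun s => m s * x s) volume 0 t) (hm0 : ∀ s ∈ Icc 0 t, 0 ≤ m s)
    (hx : ∀ s ∈ Icc 0 t, x s ^ 2 ≤ a ^ 2 + 2 * ∫ r in 0..s, m r * x r) :
    x t ≤ b + ∫ s in 0..t, m s := by
  set Y : ℝ → ℝ := fun s => b ^ 2 + 2 * ∫ r in 0..s, m r * x r with hY
  have hY_ac : AbsolutelyContinuousOnInterval Y 0 t :=
    (LipschitzWith.const (b ^ 2)).lipschitzOnWith.absolutelyContinuousOnInterval.add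
      ((hmx.absolutelyContinuousOnInterval_intervalIntegral left_mem_uIcc).const_mul 2)
  have hxY : ∀ s ∈ uIcc 0 t, x s ^ 2 + (b ^ 2 - a ^ 2) ≤ Y s := fun s hs => by
    have := hx s (uIcc_of_le ht ▸ hs)
    linarith
  have hab2 : 0 < b ^ 2 - a ^ 2 := sub_pos.2 (pow_lt_pow_left₀ hab ha two_ne_zero)
  have hxu : ∀ s ∈ uIcc 0 t, x s ≤ √(Y s) := fun s hs =>
    Real.le_sqrt_of_sq_le (by linarith [hxY s hs])
  have hu_ac : AbsolutelyContinuousOnInterval (fun s => √(Y s)) 0 t :=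
    hY_ac.sqrt hab2 fun s hs => by nlinarith [hxY s hs, sq_nonneg (x s)]
  have hu_deriv : ∀ᵐ s, s ∈ uIcc 0 t → deriv (fun s => √(Y s)) s ≤ m s := by
    filter_upwards [hmx.ae_hasDerivAt_integral] with s hs hst
    have hYs : 0 < Y s := by nlinarith [hxY s hst, sq_nonneg (x s)]
    rw [((((hs hst 0 left_mem_uIcc).const_mul 2).const_add (b ^ 2)).sqrt hYs.ne').deriv,
      div_le_iff₀ (by positivity)]
    nlinarith [hm0 s (uIcc_of_le ht ▸ hst), hxu s hst]
  have hu0 : √(Y 0) = b := by simp [hY, Real.sqrt_sq (ha.trans hab.le)]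
  have := hu_ac.sub_le_integral_of_ae_deriv_le ht hm hu_deriv
  calc x t ≤ √(Y t) := hxu t right_mem_uIcc
    _ ≤ b + ∫ s in 0..t, m s := by linarith

theorem le_add_integral_of_sq_le {m x : ℝ → ℝ} {a t : ℝ} (ha : 0 ≤ a)
    (ht : 0 ≤ t) (hm : IntervalIntegrable m volume 0 t)
    (hmx : IntervalIntegrable (fun s => m s * x s) volume 0 t) (hm0 : ∀ s ∈ Icc 0 t, 0 ≤ m s)
    (hx : ∀ s ∈ Icc 0 t, x s ^ 2 ≤ a ^ 2 + 2 * ∫ r in 0..s, m r * x r) :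
    x t ≤ a + ∫ s in 0..t, m s :=
  le_of_forall_pos_le_add fun δ hδ => by
    linarith [le_add_integral_of_sq_le_of_lt ha (lt_add_of_pos_right a hδ) ht hm hmx hm0 hx]

theorem quadratic_gronwall_general (T a : ℝ) (ha : 0 ≤ a) (m x : ℝ → ℝ)
    (hm : IntegrableOn m (Set.Icc 0 T)) (hm0 : ∀ t ∈ Set.Icc 0 T, 0 ≤ m t)
    (hx0 : ∀ t ∈ Set.Icc 0 T, 0 ≤ x t) (hxmeas : Measurable x)
    (hxbdd : ∃ C : ℝ, ∀ t ∈ Set.Icc 0 T, x t ≤ C)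
    (hineq : ∀ t ∈ Set.Icc 0 T,
      (1 / 2) * x t ^ 2 ≤ (1 / 2) * a ^ 2 + ∫ s in Set.Ioc 0 t, m s * x s) :
    ∀ t ∈ Set.Icc 0 T, x t ≤ a + ∫ s in Set.Ioc 0 t, m s := by
  obtain ⟨C, hC⟩ := hxbdd
  have hmx : IntegrableOn (fun s => m s * x s) (Icc 0 T) :=
    hm.mul_bdd hxmeas.aestronglyMeasurable.restrict <|
      (ae_restrict_iff' measurableSet_Icc).2 <| .of_forall fun s hs => by
        rw [Real.norm_of_nonneg (hx0 s hs)]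
        exact hC s hs
  intro t ht
  have hsub : Icc 0 t ⊆ Icc 0 T := Icc_subset_Icc_right ht.2
  have hint {f : ℝ → ℝ} (hf : IntegrableOn f (Icc 0 T)) : IntervalIntegrable f volume 0 t :=
    (hf.mono_set (uIcc_of_le ht.1 ▸ hsub)).intervalIntegrable
  rw [← intervalIntegral.integral_of_le ht.1]
  refine le_add_integral_of_sq_le ha ht.1 (hint hm) (hint hmx) (fun s hs => hm0 s (hsub hs))
    fun s hs => ?_
  have := hineq s (hsub hs)
  rw [← intervalIntegral.integral_of_le hs.1] at this
  linarith

/-- Quadratic Gronwall-type lemma (Tolstonogov, Lemma 2.8). -/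
theorem quadratic_gronwall (T a : ℝ) (hT : 0 < T) (ha : 0 ≤ a) (m x : ℝ → ℝ)
    (hm : IntegrableOn m (Set.Icc 0 T)) (hm0 : ∀ t ∈ Set.Icc 0 T, 0 ≤ m t)
    (hx0 : ∀ t ∈ Set.Icc 0 T, 0 ≤ x t) (hxmeas : Measurable x)
    (hxbdd : ∃ C : ℝ, ∀ t ∈ Set.Icc 0 T, x t ≤ C)
    (hineq : ∀ t ∈ Set.Icc 0 T,
      (1 / 2) * x t ^ 2 ≤ (1 / 2) * a ^ 2 + ∫ s in Set.Ioc 0 t, m s * x s) :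
    ∀ t ∈ Set.Icc 0 T, x t ≤ a + ∫ s in Set.Ioc 0 t, m s :=
  quadratic_gronwall_general T a ha m x hm hm0 hx0 hxmeas hxbdd hineq
end

section
/- Let $E$ be a real Hilbert space and $A, B : E \rightrightarrows E$ be maximal monotone operators. Define the Vladimirov pseudo-distance $dis(A,B) = \sup\{\langle y - y', x' - x\rangle / (1 + \|y\| + \|y'\|) : x \in D(A), y \in Ax, x' \in D(B), y' \in Bx'\}$. Then for $\eta > 0$ and $x \in D(A)$: $\|x - J_\eta^B(x)\| \leq \eta\|A^0(x)\| + dis(A,B) + \sqrt{\eta(1 + \|A^0(x)\|)\,dis(A,B)}$, where $J_\eta^B = (I + \eta B)^{-1}$ and $A^0(x)$ is the element of minimal norm of $A(x)$. -/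
open scoped RealInnerProductSpace

variable {E : Type*} [NormedAddCommGroup E] [InnerProductSpace ℝ E]

/-- A set-valued operator `A : E ⇉ E` is monotone. -/
def IsMonotoneOp (A : E → Set E) : Prop :=
  ∀ ⦃x₁ x₂ y₁ y₂ : E⦄, y₁ ∈ A x₁ → y₂ ∈ A x₂ → 0 ≤ ⟪y₁ - y₂, x₁ - x₂⟫

/-- Maximal monotone operator. -/
def IsMaximalMonotone (A : E → Set E) : Prop :=
  IsMonotoneOp A ∧ ∀ x y : E, (∀ z w, w ∈ A z → 0 ≤ ⟪w - y, z - x⟫) → y ∈ A x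

/-- The Vladimirov pseudo-distance between two set-valued operators. -/
noncomputable def vdis (A B : E → Set E) : EReal :=
  ⨆ (x : E) (y : E) (_ : y ∈ A x) (x' : E) (y' : E) (_ : y' ∈ B x'),
    ((⟪y - y', x' - x⟫ / (1 + ‖y‖ + ‖y'‖) : ℝ) : EReal)

/-- Lemma 2.3(1): resolvent estimate in terms of the Vladimirov pseudo-distance. -/
theorem resolvent_dis_estimate (A B : E → Set E)
    (hA : IsMaximalMonotone A) (hB : IsMaximalMonotone B)
    (d : ℝ) (hd0 : 0 ≤ d) (hd : vdis A B = (d : EReal))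
    (η : ℝ) (hη : 0 < η) (JB : E → E)
    (hJ : ∀ x : E, ∃ y ∈ B (JB x), x = JB x + η • y)
    (A0 : E → E)
    (hA0 : ∀ z : E, (A z).Nonempty → A0 z ∈ A z ∧ ∀ w ∈ A z, ‖A0 z‖ ≤ ‖w‖)
    (x : E) (hx : (A x).Nonempty) :
    ‖x - JB x‖ ≤ η * ‖A0 x‖ + d + Real.sqrt (η * (1 + ‖A0 x‖) * d) := by
  obtain ⟨hA0x, -⟩ := hA0 x hx
  obtain ⟨y', hy', hxe⟩ := hJ x
  set u := JB x with hu
  set a := ‖A0 x‖ with ha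
  set t := ‖x - u‖ with htdef
  have hxu : x - u = η • y' := by rw [hxe]; abel
  have ht_eq : t = η * ‖y'‖ := by
    rw [htdef, hxu, norm_smul, Real.norm_eq_abs, abs_of_pos hη]
  have hterm : (⟪A0 x - y', u - x⟫ / (1 + a + ‖y'‖) : ℝ) ≤ d := by
    have h1 : ((⟪A0 x - y', u - x⟫ / (1 + ‖A0 x‖ + ‖y'‖) : ℝ) : EReal) ≤ vdis A B := by
      unfold vdis
      apply le_iSup_of_le x
      apply le_iSup_of_le (A0 x)
      apply le_iSup_of_le hA0x
      apply le_iSup_of_le u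
      apply le_iSup_of_le y'
      exact le_iSup_of_le hy' le_rfl
    rw [hd] at h1
    exact_mod_cast h1
  have hden : (0:ℝ) < 1 + a + ‖y'‖ := by positivity
  have hkey0 : ⟪A0 x - y', u - x⟫ ≤ d * (1 + a + ‖y'‖) := (div_le_iff₀ hden).mp hterm
  have hip : ⟪A0 x - y', u - x⟫ = ⟪A0 x, u - x⟫ + η * ‖y'‖^2 := by
    rw [inner_sub_left]
    have h4 : u - x = -(η • y') := by rw [← hxu]; abel
    rw [h4, inner_neg_right, inner_neg_right, real_inner_smul_right, real_inner_smul_right,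
      real_inner_self_eq_norm_sq]
    ring
  have hcs : ⟪A0 x, x - u⟫ ≤ a * t := by
    calc ⟪A0 x, x - u⟫ ≤ ‖A0 x‖ * ‖x - u‖ := real_inner_le_norm _ _
    _ = a * t := rfl
  have h3 : ⟪A0 x, u - x⟫ = - ⟪A0 x, x - u⟫ := by
    rw [← inner_neg_right]; congr 1; abel
  have hq : t^2 ≤ η * d * (1 + a) + d * t + η * a * t := by
    have h2 : η * ‖y'‖^2 ≤ d * (1 + a + ‖y'‖) + a * t := by nlinarith [hkey0, hip, hcs]
    have h2' : η * (η * ‖y'‖^2) ≤ η * (d * (1 + a + ‖y'‖) + a * t) :=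
      mul_le_mul_of_nonneg_left h2 hη.le
    have e1 : t^2 = η * (η * ‖y'‖^2) := by rw [ht_eq]; ring
    have e2 : η * d * ‖y'‖ = d * t := by rw [ht_eq]; ring
    nlinarith [h2', e1, e2]
  have ha_nn : 0 ≤ a := norm_nonneg _
  have ht_nn : 0 ≤ t := norm_nonneg _
  have hs_nn : 0 ≤ Real.sqrt (η * (1 + a) * d) := Real.sqrt_nonneg _
  have hs_sq : Real.sqrt (η * (1 + a) * d) ^ 2 = η * (1 + a) * d :=
    Real.sq_sqrt (by positivity)
  set s := Real.sqrt (η * (1 + a) * d) with hs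
  show t ≤ η * a + d + s
  nlinarith [hq, hs_sq, hs_nn, hd0, hη.le, ha_nn, ht_nn,
    mul_nonneg hs_nn ht_nn, mul_nonneg ha_nn hη.le]
end

section
/- Let $E$ be a real Hilbert space and let $C_1, C_2 \subseteq E$ be nonempty closed convex sets. Let $N_{C_i}$ denote the normal cone operator of $C_i$ (i.e. $N_{C_i}(x) = \{v : \langle v, y - x\rangle \leq 0 \ \forall y \in C_i\}$ for $x \in C_i$, empty otherwise). Then the Vladimirov pseudo-distance satisfies $dis(N_{C_1}, N_{C_2}) = d_H(C_1, C_2)$, the Hausdorff distance between $C_1$ and $C_2$. -/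
open scoped RealInnerProductSpace ENNReal

variable {E : Type*} [NormedAddCommGroup E] [InnerProductSpace ℝ E]

/-- The normal cone operator of a set `C`. -/
def normalCone (C : Set E) (x : E) : Set E :=
  {v : E | x ∈ C ∧ ∀ y ∈ C, ⟪v, y - x⟫ ≤ 0}

/-!
The inequality `dis ≤ d_H`: for `y ∈ N_{C₁}(x)` and any `p ∈ C₁` we have
`⟪y, x' - x⟫ ≤ ⟪y, x' - p⟫ ≤ ‖y‖ ‖x' - p‖`, so `⟪y, x' - x⟫ ≤ ‖y‖ d(x', C₁) ≤ ‖y‖ d_H` when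
`x' ∈ C₂`; symmetrically for `y'`, and the two bounds add up to `(‖y‖ + ‖y'‖) d_H`.

The inequality `d_H ≤ dis`: for `u ∈ C₂` let `v` be its projection onto `C₁`, so that
`u - v ∈ N_{C₁}(v)` and `‖u - v‖ = d(u, C₁) =: d`. Pairing `(v, s • (u - v))` with `(u, 0)`
gives the term `s d² / (1 + s d)`, which tends to `d` as `s → ∞`. Since `dis` is symmetric, the
same holds with the roles of `C₁` and `C₂` exchanged.
-/

section Vdis

variable {A B : E → Set E}

lemma le_vdis {x y x' y' : E} (hy : y ∈ A x) (hy' : y' ∈ B x') :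
    ((⟪y - y', x' - x⟫ / (1 + ‖y‖ + ‖y'‖) : ℝ) : EReal) ≤ vdis A B :=
  le_iSup₂_of_le x y <| le_iSup₂_of_le hy x' <| le_iSup₂_of_le y' hy' le_rfl

lemma vdis_le {c : EReal}
    (h : ∀ x y, y ∈ A x → ∀ x' y', y' ∈ B x' →
      ((⟪y - y', x' - x⟫ / (1 + ‖y‖ + ‖y'‖) : ℝ) : EReal) ≤ c) :
    vdis A B ≤ c := by
  simp only [vdis, iSup_le_iff]
  exact h

lemma vdis_le_vdis_swap : vdis A B ≤ vdis B A :=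
  vdis_le fun x y hy x' y' hy' => calc
    _ = ((⟪y' - y, x - x'⟫ / (1 + ‖y'‖ + ‖y‖) : ℝ) : EReal) := by
      rw [← inner_neg_neg, neg_sub, neg_sub, add_right_comm]
    _ ≤ vdis B A := le_vdis hy' hy

lemma vdis_comm : vdis A B = vdis B A :=
  le_antisymm vdis_le_vdis_swap vdis_le_vdis_swap

end Vdis

section NormalCone

variable {C : Set E} {x y : E}

lemma zero_mem_normalCone (hx : x ∈ C) : (0 : E) ∈ normalCone C x :=
  ⟨hx, fun _ _ => by rw [inner_zero_left]⟩

lemma smul_mem_normalCone {s : ℝ} (hs : 0 ≤ s) (hy : y ∈ normalCone C x) :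
    s • y ∈ normalCone C x :=
  ⟨hy.1, fun p hp => by
    rw [real_inner_smul_left]
    exact mul_nonpos_of_nonneg_of_nonpos hs (hy.2 p hp)⟩

lemma inner_le_norm_mul_infDist_of_mem_normalCone (hy : y ∈ normalCone C x) (z : E) :
    ⟪y, z - x⟫ ≤ ‖y‖ * Metric.infDist z C := by
  rcases (norm_nonneg y).eq_or_lt with hy0 | hy0
  · rw [← hy0, norm_eq_zero.1 hy0.symm, inner_zero_left, zero_mul]
  rw [← div_le_iff₀' hy0, Metric.le_infDist ⟨x, hy.1⟩]
  intro p hp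
  rw [div_le_iff₀' hy0, dist_eq_norm]
  calc ⟪y, z - x⟫ = ⟪y, z - p⟫ + ⟪y, p - x⟫ := by rw [← inner_add_right, sub_add_sub_cancel]
    _ ≤ ‖y‖ * ‖z - p‖ + 0 := add_le_add (real_inner_le_norm y _) (hy.2 p hp)
    _ = ‖y‖ * ‖z - p‖ := add_zero _

lemma exists_norm_sub_eq_infDist_and_mem_normalCone (hne : C.Nonempty) (hC : IsComplete C)
    (hv : Convex ℝ C) (u : E) :
    ∃ v, ‖u - v‖ = Metric.infDist u C ∧ u - v ∈ normalCone C v := by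
  obtain ⟨v, hvC, hmin⟩ := exists_norm_eq_iInf_of_complete_convex hne hC hv u
  refine ⟨v, ?_, hvC, (norm_eq_iInf_iff_real_inner_le_zero hv hvC).1 hmin⟩
  rw [hmin, Metric.infDist_eq_iInf]
  simp_rw [dist_eq_norm]

end NormalCone

section Hausdorff

variable {C₁ C₂ : Set E}

lemma vdis_normalCone_le_hausdorffEDist :
    vdis (normalCone C₁) (normalCone C₂) ≤ (Metric.hausdorffEDist C₁ C₂ : EReal) := by
  rcases eq_or_ne (Metric.hausdorffEDist C₁ C₂) ⊤ with hH | hH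
  · rw [hH, EReal.coe_ennreal_top]
    exact le_top
  rw [← ENNReal.ofReal_toReal hH, EReal.coe_ennreal_ofReal,
    max_eq_left ENNReal.toReal_nonneg]
  set D := Metric.hausdorffDist C₁ C₂
  refine vdis_le fun x y hy x' y' hy' => EReal.coe_le_coe_iff.2 (?_ : _ ≤ D)
  have hx : Metric.infDist x C₂ ≤ D := Metric.infDist_le_hausdorffDist_of_mem hy.1 hH
  have hx' : Metric.infDist x' C₁ ≤ D := by
    rw [Metric.hausdorffEDist_comm] at hH
    exact (Metric.infDist_le_hausdorffDist_of_mem hy'.1 hH).trans_eq Metric.hausdorffDist_comm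
  have hD : 0 ≤ D := Metric.hausdorffDist_nonneg
  rw [div_le_iff₀' (by positivity)]
  calc ⟪y - y', x' - x⟫ = ⟪y, x' - x⟫ + ⟪y', x - x'⟫ := by
        rw [inner_sub_left, ← neg_sub x' x, inner_neg_right, sub_eq_add_neg]
    _ ≤ ‖y‖ * D + ‖y'‖ * D := add_le_add
        ((inner_le_norm_mul_infDist_of_mem_normalCone hy x').trans (by gcongr))
        ((inner_le_norm_mul_infDist_of_mem_normalCone hy' x).trans (by gcongr))
    _ ≤ (1 + ‖y‖ + ‖y'‖) * D := by nlinarith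

lemma infEDist_le_vdis_normalCone (hne : C₁.Nonempty) (hC : IsComplete C₁) (hv : Convex ℝ C₁)
    {u : E} (hu : u ∈ C₂) :
    (Metric.infEDist u C₁ : EReal) ≤ vdis (normalCone C₁) (normalCone C₂) := by
  rw [← ENNReal.ofReal_toReal (Metric.infEDist_ne_top hne), EReal.coe_ennreal_ofReal,
    max_eq_left ENNReal.toReal_nonneg]
  change (Metric.infDist u C₁ : EReal) ≤ _
  obtain ⟨v, hd, hnormal⟩ := exists_norm_sub_eq_infDist_and_mem_normalCone hne hC hv u
  set d := Metric.infDist u C₁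
  clear_value d
  -- `(n / d) • (u - v)` has norm `n` when `d > 0`, and is `0` when `d = 0`
  have hterm (n : ℕ) :
      ((d * (n / (n + 1)) : ℝ) : EReal) ≤ vdis (normalCone C₁) (normalCone C₂) := by
    convert le_vdis (smul_mem_normalCone (div_nonneg n.cast_nonneg (hd ▸ norm_nonneg _)) hnormal)
      (zero_mem_normalCone hu) using 2
    rw [sub_zero, norm_zero, add_zero, real_inner_smul_left, real_inner_self_eq_norm_sq,
      norm_smul, hd]
    rcases (hd ▸ norm_nonneg _ : 0 ≤ d).eq_or_lt with hd0 | hd0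
    · simp [← hd0]
    · rw [Real.norm_of_nonneg (by positivity)]
      field_simp
      ring
  have hlim : Filter.Tendsto (fun n : ℕ => d * (n / (n + 1))) Filter.atTop (nhds d) := by
    simpa using (tendsto_natCast_div_add_atTop (1 : ℝ)).const_mul d
  exact le_of_tendsto' ((continuous_coe_real_ereal.tendsto d).comp hlim) hterm

lemma hausdorffEDist_le_vdis_normalCone (h₁ : C₁.Nonempty) (h₂ : C₂.Nonempty)
    (hC₁ : IsComplete C₁) (hC₂ : IsComplete C₂) (hv₁ : Convex ℝ C₁) (hv₂ : Convex ℝ C₂) :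
    (Metric.hausdorffEDist C₁ C₂ : EReal) ≤ vdis (normalCone C₁) (normalCone C₂) := by
  have h₁₂ {u : E} (hu : u ∈ C₁) :
      (Metric.infEDist u C₂ : EReal) ≤ vdis (normalCone C₁) (normalCone C₂) :=
    vdis_comm (A := normalCone C₂) ▸ infEDist_le_vdis_normalCone h₂ hC₂ hv₂ hu
  have h₂₁ {u : E} (hu : u ∈ C₂) :
      (Metric.infEDist u C₁ : EReal) ≤ vdis (normalCone C₁) (normalCone C₂) :=
    infEDist_le_vdis_normalCone h₁ hC₁ hv₁ hu
  obtain ⟨u, hu⟩ := h₁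
  rw [← EReal.coe_toENNReal ((EReal.coe_ennreal_nonneg _).trans (h₁₂ hu)),
    EReal.coe_ennreal_le_coe_ennreal_iff]
  refine Metric.hausdorffEDist_le_of_infEDist (fun x hx => ?_) (fun x hx => ?_)
  · simpa only [EReal.toENNReal_coe] using EReal.toENNReal_le_toENNReal (h₁₂ hx)
  · simpa only [EReal.toENNReal_coe] using EReal.toENNReal_le_toENNReal (h₂₁ hx)

end Hausdorff

/-- For closed convex sets, the Vladimirov pseudo-distance between the normal cone
operators equals the Hausdorff distance between the sets. -/
theorem vdis_normalCone_eq_hausdorff [CompleteSpace E]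
    (C₁ C₂ : Set E) (h₁ : C₁.Nonempty) (h₂ : C₂.Nonempty)
    (hc₁ : IsClosed C₁) (hc₂ : IsClosed C₂)
    (hv₁ : Convex ℝ C₁) (hv₂ : Convex ℝ C₂) :
    vdis (normalCone C₁) (normalCone C₂) =
      ((EMetric.hausdorffEdist C₁ C₂ : ℝ≥0∞) : EReal) :=
  le_antisymm vdis_normalCone_le_hausdorffEDist <|
    hausdorffEDist_le_vdis_normalCone h₁ h₂ hc₁.isComplete hc₂.isComplete hv₁ hv₂
end

section
/- Let $\mu$ be a finite positive measure on $I = [0,T]$, let $g \in L^1(I,\mu)$ be nonnegative and $\beta \in [0,1)$ such that $\mu(\{t\})g(t) \leq \beta$ for all $t \in I$. Let $\varphi \in L^\infty(I,\mu)$ be nonnegative and satisfy $\varphi(t) \leq \alpha + \int_{(0,t]} g(s)\varphi(s)\,d\mu(s)$ for all $t \in I$, where $\alpha \geq 0$. Then $\varphi(t) \leq \alpha\exp\big(\tfrac{1}{1-\beta}\int_{(0,t]} g(s)\,d\mu(s)\big)$ for all $t \in I$. -/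
/-!
Write `ν = g μ` and `V t = α + ∫_{(0,t]} g φ dμ`. Then `V` is nondecreasing and dominates `φ`, so
`V y (1 - ν(x,y]) ≤ V x` for `x ≤ y`. For `0 ≤ δ ≤ β' < 1` one has `(1 - δ) e^{δ/(1-β')} ≥ 1`,
hence `V · exp (-ν(0,·] / (1 - β'))` decreases across every interval of `ν`-mass at most `β'`.
If `β < β' < 1`, every atom of `ν` has mass `< β'`, so by compactness of `[0, t]` (Lebesgue number
lemma) all sufficiently short subintervals have mass `< β'`, and the function decreases on all of
`[0, t]`. This gives `V t ≤ α exp (ν(0,t] / (1 - β'))`; let `β' ↓ β`.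
-/

open MeasureTheory Filter Set Metric Topology

theorem IsCompact.exists_pos_forall_measure_ball_lt {X : Type*} [MetricSpace X]
    [MeasurableSpace X] [OpensMeasurableSpace X] (ν : Measure X) [IsLocallyFiniteMeasure ν]
    {s : Set X} (hs : IsCompact s) {c : ENNReal} (hc : ∀ x ∈ s, ν {x} < c) :
    ∃ δ > 0, ∀ x ∈ s, ν (ball x δ) < c := by
  have hsmall : ∀ x ∈ s, ∃ r > 0, ν (ball x r) < c := by
    intro x hx
    have hlim : Tendsto (fun r => ν (ball x r)) (𝓝[>] 0) (𝓝 (ν {x})) := by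
      simpa only [thickening_singleton, closure_singleton] using
        tendsto_measure_thickening (μ := ν) (s := {x})
          (by simpa only [thickening_singleton, lt_top_iff_ne_top] using
            (ν.finiteAt_nhds x).exists_mem_basis nhds_basis_ball)
    exact ((hlim.eventually (gt_mem_nhds (hc x hx))).and self_mem_nhdsWithin).exists.imp
      fun r hr => ⟨hr.2, hr.1⟩
  choose! r hr_pos hr_lt using hsmall
  obtain ⟨δ, hδ, hcover⟩ := lebesgue_number_lemma_of_metric (c := fun x : s => ball (x : X) (r x))
    hs (fun _ => isOpen_ball) fun x hx => mem_iUnion.2 ⟨⟨x, hx⟩, mem_ball_self (hr_pos x hx)⟩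
  refine ⟨δ, hδ, fun x hx => ?_⟩
  obtain ⟨y, hy⟩ := hcover x hx
  exact (measure_mono hy).trans_lt (hr_lt y y.2)

theorem le_of_forall_sub_lt_le {α : Type*} [Preorder α] {e : ℝ → α} {a b δ : ℝ}
    (hab : a ≤ b) (hδ : 0 < δ)
    (he : ∀ x ∈ Icc a b, ∀ y ∈ Icc a b, x ≤ y → y - x < δ → e y ≤ e x) : e b ≤ e a := by
  have hstep : ∀ n : ℕ, ∀ y ∈ Icc a b, y ≤ a + n * (δ / 2) → e y ≤ e a := by
    intro n
    induction n with
    | zero =>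
      intro y hy hya
      rw [le_antisymm (by simpa using hya) hy.1]
    | succ n ih =>
      intro y hy hya
      by_cases hyn : y ≤ a + n * (δ / 2)
      · exact ih y hy hyn
      · have hx : a + n * (δ / 2) ∈ Icc a b :=
          ⟨le_add_of_nonneg_right (by positivity), by linarith [hy.2]⟩
        push_cast at hya
        exact (he _ hx y hy (by linarith) (by linarith)).trans (ih _ hx le_rfl)
  obtain ⟨n, hn⟩ := exists_nat_ge ((b - a) / (δ / 2))
  exact hstep n b ⟨hab, le_rfl⟩ (by rw [div_le_iff₀ (by positivity)] at hn; linarith)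

theorem one_le_one_sub_mul_exp_div {δ β : ℝ} (hδ₀ : 0 ≤ δ) (hδ : δ ≤ β) (hβ : β < 1) :
    1 ≤ (1 - δ) * Real.exp (δ / (1 - β)) := by
  have h1 : 0 < 1 - δ := by linarith
  calc 1 = (1 - δ) * (δ / (1 - δ) + 1) := by field_simp; ring
    _ ≤ (1 - δ) * Real.exp (δ / (1 - β)) := by
      have : δ / (1 - δ) ≤ δ / (1 - β) := by gcongr
      gcongr
      exact (add_le_add_left this 1).trans (Real.add_one_le_exp _)

theorem measureReal_Ioc_add_measureReal_Ioc (ν : Measure ℝ) [IsFiniteMeasure ν] {a b c : ℝ}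
    (hab : a ≤ b) (hbc : b ≤ c) : ν.real (Ioc a b) + ν.real (Ioc b c) = ν.real (Ioc a c) := by
  rw [← Ioc_union_Ioc_eq_Ioc hab hbc,
    measureReal_union (Ioc_disjoint_Ioc_of_le le_rfl) measurableSet_Ioc]

section AtomicGronwall

variable (ν : Measure ℝ) [IsFiniteMeasure ν] {a b β : ℝ} {W : ℝ → ℝ}

theorem le_mul_exp_measureReal_Ioc_of_measureReal_singleton_lt (hab : a ≤ b) (hβ : β < 1)
    (hatom : ∀ t ∈ Icc a b, ν.real {t} < β) (hW : ∀ t ∈ Icc a b, 0 ≤ W t)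
    (hstep : ∀ x ∈ Icc a b, ∀ y ∈ Icc a b, x ≤ y → W y ≤ W x + W y * ν.real (Ioc x y)) :
    W b ≤ W a * Real.exp (ν.real (Ioc a b) / (1 - β)) := by
  obtain ⟨δ, hδ, hball⟩ := isCompact_Icc.exists_pos_forall_measure_ball_lt ν
    fun t ht => (ENNReal.lt_ofReal_iff_toReal_lt (measure_ne_top ν _)).2 (hatom t ht)
  have hshort : ∀ x ∈ Icc a b, ∀ y ∈ Icc a b, x ≤ y → y - x < δ → ν.real (Ioc x y) ≤ β := by
    intro x _ y hy _ hxy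
    have hsub : Ioc x y ⊆ ball y δ := fun r hr => by
      rw [mem_ball, Real.dist_eq, abs_sub_lt_iff]; constructor <;> linarith [hr.1, hr.2]
    have hβ₀ : 0 ≤ β := measureReal_nonneg.trans (hatom y hy).le
    exact ENNReal.toReal_le_of_le_ofReal hβ₀ ((measure_mono hsub).trans (hball y hy).le)
  set G : ℝ → ℝ := fun x => ν.real (Ioc a x)
  have hanti : ∀ x ∈ Icc a b, ∀ y ∈ Icc a b, x ≤ y → y - x < δ →
      W y * Real.exp (-G y / (1 - β)) ≤ W x * Real.exp (-G x / (1 - β)) := by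
    intro x hx y hy hxy hyx
    have hG : G y = G x + ν.real (Ioc x y) :=
      (measureReal_Ioc_add_measureReal_Ioc ν hx.1 hxy).symm
    have hkey := one_le_one_sub_mul_exp_div measureReal_nonneg (hshort x hx y hy hxy hyx) hβ
    have h1 : W y ≤ W x * Real.exp (ν.real (Ioc x y) / (1 - β)) := by
      nlinarith [hkey, hstep x hx y hy hxy, hW y hy, Real.exp_pos (ν.real (Ioc x y) / (1 - β))]
    calc W y * Real.exp (-G y / (1 - β))
        ≤ W x * Real.exp (ν.real (Ioc x y) / (1 - β)) * Real.exp (-G y / (1 - β)) := by gcongr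
      _ = W x * Real.exp (-G x / (1 - β)) := by
        rw [mul_assoc, ← Real.exp_add, hG]; ring_nf
  have h := le_of_forall_sub_lt_le hab hδ hanti
  simp only [G, Ioc_self, measureReal_empty, neg_zero, zero_div, Real.exp_zero, mul_one] at h
  calc W b = W b * Real.exp (-G b / (1 - β)) * Real.exp (G b / (1 - β)) := by
        rw [mul_assoc, ← Real.exp_add, neg_div, neg_add_cancel, Real.exp_zero, mul_one]
    _ ≤ W a * Real.exp (G b / (1 - β)) := by gcongr

theorem le_mul_exp_measureReal_Ioc (hab : a ≤ b) (hβ : β < 1)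
    (hatom : ∀ t ∈ Icc a b, ν.real {t} ≤ β) (hW : ∀ t ∈ Icc a b, 0 ≤ W t)
    (hstep : ∀ x ∈ Icc a b, ∀ y ∈ Icc a b, x ≤ y → W y ≤ W x + W y * ν.real (Ioc x y)) :
    W b ≤ W a * Real.exp (ν.real (Ioc a b) / (1 - β)) := by
  have hcont : ContinuousAt (fun β' => W a * Real.exp (ν.real (Ioc a b) / (1 - β'))) β := by
    fun_prop (disch := linarith)
  refine ge_of_tendsto (hcont.tendsto.mono_left (nhdsWithin_le_nhds (s := Ioi β))) ?_
  filter_upwards [Ioo_mem_nhdsGT hβ] with β' hβ'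
  exact le_mul_exp_measureReal_Ioc_of_measureReal_singleton_lt ν hab hβ'.2
    (fun t ht => (hatom t ht).trans_lt hβ'.1) hW hstep

end AtomicGronwall

theorem setIntegral_eq_measureReal_withDensity {X : Type*} [MeasurableSpace X] {μ : Measure X}
    {g : X → ℝ} {s : Set X} (hs : MeasurableSet s) (hg : AEStronglyMeasurable g (μ.restrict s))
    (hg0 : ∀ x ∈ s, 0 ≤ g x) :
    ∫ x in s, g x ∂μ = (μ.withDensity fun x => ENNReal.ofReal (g x)).real s := by
  rw [integral_eq_lintegral_of_nonneg_ae (ae_restrict_of_forall_mem hs hg0) hg, measureReal_def,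
    withDensity_apply _ hs]

section Volterra

variable {μ : Measure ℝ} {g φ : ℝ → ℝ} {a b α : ℝ}

theorem add_setIntegral_Ioc_le_add_mul_setIntegral_Ioc
    (hg : IntegrableOn g (Icc a b) μ) (hgφ : IntegrableOn (fun s => g s * φ s) (Icc a b) μ)
    (hg0 : ∀ t ∈ Icc a b, 0 ≤ g t) (hφ0 : ∀ t ∈ Icc a b, 0 ≤ φ t)
    (hφ : ∀ t ∈ Icc a b, φ t ≤ α + ∫ s in Ioc a t, g s * φ s ∂μ) :
    ∀ x ∈ Icc a b, ∀ y ∈ Icc a b, x ≤ y →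
      α + ∫ s in Ioc a y, g s * φ s ∂μ ≤ (α + ∫ s in Ioc a x, g s * φ s ∂μ) +
        (α + ∫ s in Ioc a y, g s * φ s ∂μ) * ∫ s in Ioc x y, g s ∂μ := by
  set V : ℝ → ℝ := fun t => α + ∫ s in Ioc a t, g s * φ s ∂μ
  have hsub : ∀ {x y}, x ∈ Icc a b → y ∈ Icc a b → Ioc x y ⊆ Icc a b :=
    fun hx hy r hr => ⟨hx.1.trans hr.1.le, hr.2.trans hy.2⟩
  have hV : ∀ x ∈ Icc a b, ∀ y ∈ Icc a b, x ≤ y → V y = V x + ∫ s in Ioc x y, g s * φ s ∂μ := by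
    intro x hx y hy hxy
    have ha : a ∈ Icc a b := ⟨le_rfl, hx.1.trans hx.2⟩
    simp only [V, add_assoc, ← Ioc_union_Ioc_eq_Ioc hx.1 hxy]
    rw [setIntegral_union (Ioc_disjoint_Ioc_of_le le_rfl) measurableSet_Ioc
      (hgφ.mono_set (hsub ha hx)) (hgφ.mono_set (hsub hx hy))]
  have hV_mono : ∀ x ∈ Icc a b, ∀ y ∈ Icc a b, x ≤ y → V x ≤ V y := by
    intro x hx y hy hxy
    rw [hV x hx y hy hxy, le_add_iff_nonneg_right]
    exact setIntegral_nonneg measurableSet_Ioc fun r hr =>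
      mul_nonneg (hg0 r (hsub hx hy hr)) (hφ0 r (hsub hx hy hr))
  intro x hx y hy hxy
  have hbound : ∫ s in Ioc x y, g s * φ s ∂μ ≤ ∫ s in Ioc x y, g s * V y ∂μ := by
    refine setIntegral_mono_on (hgφ.mono_set (hsub hx hy))
      ((hg.mono_set (hsub hx hy)).mul_const _) measurableSet_Ioc fun r hr => ?_
    have hr' := hsub hx hy hr
    exact mul_le_mul_of_nonneg_left ((hφ r hr').trans (hV_mono r hr' y hy hr.2)) (hg0 r hr')
  rw [integral_mul_const] at hbound
  change V y ≤ V x + V y * _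
  linarith [hV x hx y hy hxy]

end Volterra

theorem gronwall_atomic_measure_general (T : ℝ)
    (μ : Measure ℝ)
    (g φ : ℝ → ℝ) (hg : Integrable g μ) (hφm : Measurable φ)
    (hg0 : ∀ t ∈ Set.Icc 0 T, 0 ≤ g t) (hφ0 : ∀ t ∈ Set.Icc 0 T, 0 ≤ φ t)
    (β : ℝ) (hβ1 : β < 1)
    (hatom : ∀ t ∈ Set.Icc 0 T, (μ {t}).toReal * g t ≤ β)
    (hφb : ∃ C : ℝ, ∀ t ∈ Set.Icc 0 T, φ t ≤ C)
    (α : ℝ)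
    (hineq : ∀ t ∈ Set.Icc 0 T, φ t ≤ α + ∫ s in Set.Ioc 0 t, g s * φ s ∂μ) :
    ∀ t ∈ Set.Icc 0 T,
      φ t ≤ α * Real.exp ((1 / (1 - β)) * ∫ s in Set.Ioc 0 t, g s ∂μ) := by
  intro t ht
  obtain ⟨C, hC⟩ := hφb
  set ν := μ.withDensity fun s => ENNReal.ofReal (g s)
  have : IsFiniteMeasure ν := isFiniteMeasure_withDensity_ofReal hg.2
  have hmass : ∀ s ⊆ Icc 0 T, MeasurableSet s → ∫ r in s, g r ∂μ = ν.real s := fun s hs hsm =>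
    setIntegral_eq_measureReal_withDensity hsm hg.1.restrict fun r hr => hg0 r (hs hr)
  have hgφ : IntegrableOn (fun s => g s * φ s) (Icc 0 T) μ := by
    simp_rw [mul_comm (g _)]
    refine hg.integrableOn.bdd_mul (c := C) hφm.aestronglyMeasurable.restrict
      (ae_restrict_of_forall_mem measurableSet_Icc fun r hr => ?_)
    rw [Real.norm_of_nonneg (hφ0 r hr)]
    exact hC r hr
  have hsub : Icc 0 t ⊆ Icc 0 T := Icc_subset_Icc_right ht.2
  have hstep := add_setIntegral_Ioc_le_add_mul_setIntegral_Ioc hg.integrableOn hgφ hg0 hφ0 hineq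
  calc φ t ≤ α + ∫ s in Ioc 0 t, g s * φ s ∂μ := hineq t ht
    _ ≤ (α + ∫ s in Ioc 0 0, g s * φ s ∂μ) * Real.exp (ν.real (Ioc 0 t) / (1 - β)) := by
      refine le_mul_exp_measureReal_Ioc ν ht.1 hβ1 (fun x hx => ?_)
        (fun x hx => (hφ0 x (hsub hx)).trans (hineq x (hsub hx))) fun x hx y hy hxy => ?_
      · rw [← hmass _ (singleton_subset_iff.2 (hsub hx)) (measurableSet_singleton x),
          integral_singleton, smul_eq_mul]
        exact hatom x (hsub hx)
      · rw [← hmass _ (fun r hr => hsub ⟨hx.1.trans hr.1.le, hr.2.trans hy.2⟩) measurableSet_Ioc]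
        exact hstep x (hsub hx) y (hsub hy) hxy
    _ = α * Real.exp ((1 / (1 - β)) * ∫ s in Ioc 0 t, g s ∂μ) := by
      rw [hmass _ (Ioc_subset_Icc_self.trans hsub) measurableSet_Ioc]
      simp [div_eq_inv_mul]

/-- Gronwall lemma for a possibly atomic positive finite measure (Lemma 2.6). -/
theorem gronwall_atomic_measure (T : ℝ) (hT : 0 < T)
    (μ : Measure ℝ) [IsFiniteMeasure μ]
    (g φ : ℝ → ℝ) (hg : Integrable g μ) (hgm : Measurable g) (hφm : Measurable φ)
    (hg0 : ∀ t ∈ Set.Icc 0 T, 0 ≤ g t) (hφ0 : ∀ t ∈ Set.Icc 0 T, 0 ≤ φ t)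
    (β : ℝ) (hβ0 : 0 ≤ β) (hβ1 : β < 1)
    (hatom : ∀ t ∈ Set.Icc 0 T, (μ {t}).toReal * g t ≤ β)
    (hφb : ∃ C : ℝ, ∀ t ∈ Set.Icc 0 T, φ t ≤ C)
    (α : ℝ) (hα : 0 ≤ α)
    (hineq : ∀ t ∈ Set.Icc 0 T, φ t ≤ α + ∫ s in Set.Ioc 0 t, g s * φ s ∂μ) :
    ∀ t ∈ Set.Icc 0 T,
      φ t ≤ α * Real.exp ((1 / (1 - β)) * ∫ s in Set.Ioc 0 t, g s ∂μ) :=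
  gronwall_atomic_measure_general T μ g φ hg hφm hg0 hφ0 β hβ1 hatom hφb α hineq
end

section
/- Let $\mu$ be a non-atomic finite positive measure on $I=[0,T]$, let $c \in L^1(I,\mu)$ and $p \in L^\infty(I,\mu)$ be nonnegative functions, and let $\alpha \geq 0$. Assume that for $\mu$-a.e. $t \in I$, $p(t) \leq \alpha + \int_{[0,t]} c(s)p(s)\,d\mu(s)$. Then for $\mu$-a.e. $t \in I$, $p(t) \leq \alpha\exp\big(\int_{[0,t]} c(s)\,d\mu(s)\big)$. -/
/-!
Let `ν = c μ` on `[0, T]` and `F t = ν (-∞, t]`. As `ν` has no atoms, `F` is continuous, so every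
superlevel set `{F ≥ x}` is a closed half-line `[u, ∞)` with `F u ≥ x`, and `ν ({F ≥ x} ∩ (-∞, t])`
is at most `F t - x`. The layer-cake formula then gives `∫_{(-∞, t]} e^F dν ≤ e^{F t} - 1`, the
integrated form of the chain rule `d(e^F) = e^F dF`.
Consequently `p ≤ a e^F` a.e. improves to `p ≤ α + a (e^F - 1) ≤ (α + (a - α) θ) e^F` with
`θ = 1 - e^{-ν ℝ} < 1`; iterating from `a = max C α` drives `a` down to `α`.
-/

open MeasureTheory Set Filter Real
open scoped Topology

theorem integral_sub_mul_exp (m : ℝ) : ∫ x in (0 : ℝ)..m, (m - x) * exp x = exp m - 1 - m := by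
  have hderiv : ∀ x ∈ uIcc 0 m, HasDerivAt (fun y => (m + 1 - y) * exp y) ((m - x) * exp x) x :=
    fun x _ => (((hasDerivAt_id' x).const_sub (m + 1)).fun_mul (hasDerivAt_exp x)).congr_deriv
      (by ring)
  rw [intervalIntegral.integral_eq_sub_of_hasDerivAt hderiv
    (Continuous.intervalIntegrable (by fun_prop) _ _)]
  simp only [exp_zero]
  ring

theorem lintegral_ofReal_sub_mul_exp_Ioi_le {m : ℝ} (hm : 0 ≤ m) :
    ∫⁻ x in Ioi 0, ENNReal.ofReal (m - x) * ENNReal.ofReal (exp x) ≤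
      ENNReal.ofReal (exp m - 1 - m) := by
  have hIoi : ∫⁻ x in Ioi m, ENNReal.ofReal (m - x) * ENNReal.ofReal (exp x) = 0 :=
    setLIntegral_eq_zero measurableSet_Ioi fun x hx => by
      simp [ENNReal.ofReal_eq_zero.2 (sub_nonpos.2 (le_of_lt hx))]
  calc ∫⁻ x in Ioi 0, ENNReal.ofReal (m - x) * ENNReal.ofReal (exp x)
      ≤ ∫⁻ x in Ioc 0 m, ENNReal.ofReal ((m - x) * exp x) := by
        rw [← Ioc_union_Ioi_eq_Ioi hm]
        refine (lintegral_union_le _ _ _).trans ?_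
        simp_rw [hIoi, add_zero, ENNReal.ofReal_mul' (exp_pos _).le, le_refl]
    _ = ENNReal.ofReal (exp m - 1 - m) := by
        rw [← ofReal_integral_eq_lintegral_ofReal (Continuous.integrableOn_Ioc (by fun_prop))
          ((ae_restrict_iff' measurableSet_Ioc).2 (ae_of_all _ fun x hx =>
            mul_nonneg (sub_nonneg.2 hx.2) (exp_pos x).le)),
          ← intervalIntegral.integral_of_le hm, integral_sub_mul_exp]

section DistributionFunction

variable (ν : Measure ℝ) [IsFiniteMeasure ν]

theorem monotone_measureReal_Iic : Monotone fun t => ν.real (Iic t) :=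
  fun _ _ h => measureReal_mono (Iic_subset_Iic.2 h)

theorem exists_measureReal_Iic_lt {x : ℝ} (hx : 0 < x) : ∃ s, ν.real (Iic s) < x := by
  have h := tendsto_measure_iInter_atBot (μ := ν) (fun s => measurableSet_Iic.nullMeasurableSet)
    monotone_Iic ⟨0, measure_ne_top _ _⟩
  rw [iInter_Iic_eq_empty_iff.2 (by simp), measure_empty] at h
  obtain ⟨s, hs⟩ := (h.eventually_lt_const (ENNReal.ofReal_pos.2 hx)).exists
  exact ⟨s, ENNReal.toReal_lt_of_lt_ofReal hs⟩

variable [NullSingletonClass ν]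

theorem continuous_measureReal_Iic : Continuous fun t => ν.real (Iic t) := by
  refine continuous_iff_continuousAt.2 fun t => ?_
  have h := (integrableOn_const (μ := ν) (s := Iic (t + 1)) (C := (1 : ℝ))
    ).continuousOn_Iic_primitive_Iic
  simp only [integral_const, smul_eq_mul, mul_one, measureReal_restrict_apply_univ] at h
  exact h.continuousAt (Iic_mem_nhds (by linarith))

theorem measure_setOf_le_measureReal_Iic_inter_Iic_le (t : ℝ) {x : ℝ} (hx : 0 < x) :
    ν ({s | x ≤ ν.real (Iic s)} ∩ Iic t) ≤ ENNReal.ofReal (ν.real (Iic t) - x) := by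
  set S := {s | x ≤ ν.real (Iic s)}
  rcases (S ∩ Iic t).eq_empty_or_nonempty with h | ⟨s₁, hs₁S, hs₁t⟩
  · simp [h]
  have hbdd : BddBelow S := by
    obtain ⟨s₀, hs₀⟩ := exists_measureReal_Iic_lt ν hx
    refine ⟨s₀, fun s hs => le_of_not_ge fun hss₀ => ?_⟩
    exact (hs.trans (monotone_measureReal_Iic ν hss₀)).not_gt hs₀
  have huS : sInf S ∈ S :=
    (isClosed_le continuous_const (continuous_measureReal_Iic ν)).csInf_mem ⟨s₁, hs₁S⟩ hbdd
  have hut : sInf S ≤ t := (csInf_le hbdd hs₁S).trans hs₁t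
  calc ν (S ∩ Iic t) ≤ ν (Iic t \ Iio (sInf S)) :=
        measure_mono fun s hs => ⟨hs.2, not_lt.2 (csInf_le hbdd hs.1)⟩
    _ = ENNReal.ofReal (ν.real (Iic t) - ν.real (Iic (sInf S))) := by
        rw [← ofReal_measureReal,
          measureReal_sdiff (Iio_subset_Iic_self.trans (Iic_subset_Iic.2 hut)) measurableSet_Iio,
          measureReal_congr Iio_ae_eq_Iic]
    _ ≤ ENNReal.ofReal (ν.real (Iic t) - x) := ENNReal.ofReal_le_ofReal (by linarith [huS.out])

theorem lintegral_exp_measureReal_Iic_sub_one_le (t : ℝ) :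
    ∫⁻ s in Iic t, ENNReal.ofReal (exp (ν.real (Iic s)) - 1) ∂ν ≤
      ENNReal.ofReal (exp (ν.real (Iic t)) - 1 - ν.real (Iic t)) := by
  have hlayer := lintegral_comp_eq_lintegral_meas_le_mul (ν.restrict (Iic t))
    (ae_of_all _ fun s => measureReal_nonneg) (monotone_measureReal_Iic ν).measurable.aemeasurable
    (fun x _ => continuous_exp.intervalIntegrable 0 x) (ae_of_all _ fun x => (exp_pos x).le)
  simp only [integral_exp, exp_zero] at hlayer
  rw [hlayer]
  calc ∫⁻ x in Ioi 0, ν.restrict (Iic t) {s | x ≤ ν.real (Iic s)} * ENNReal.ofReal (exp x)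
      ≤ ∫⁻ x in Ioi 0, ENNReal.ofReal (ν.real (Iic t) - x) * ENNReal.ofReal (exp x) := by
        refine setLIntegral_mono' measurableSet_Ioi fun x hx => mul_le_mul_left ?_ _
        rw [Measure.restrict_apply (measurableSet_le measurable_const
          (monotone_measureReal_Iic ν).measurable)]
        exact measure_setOf_le_measureReal_Iic_inter_Iic_le ν t hx
    _ ≤ _ := lintegral_ofReal_sub_mul_exp_Ioi_le measureReal_nonneg

theorem integrable_exp_measureReal_Iic : Integrable (fun s => exp (ν.real (Iic s))) ν :=
  .of_bound (continuous_exp.comp (continuous_measureReal_Iic ν)).aestronglyMeasurable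
    (exp (ν.real univ)) (ae_of_all _ fun s => by
      simpa using measureReal_mono (μ := ν) (subset_univ (Iic s)))

theorem setIntegral_exp_measureReal_Iic_le (t : ℝ) :
    ∫ s in Iic t, exp (ν.real (Iic s)) ∂ν ≤ exp (ν.real (Iic t)) - 1 := by
  have hcont : Continuous fun s => exp (ν.real (Iic s)) :=
    continuous_exp.comp (continuous_measureReal_Iic ν)
  have hint := (integrable_exp_measureReal_Iic ν).restrict (s := Iic t)
  have hsub : ∫ s in Iic t, (exp (ν.real (Iic s)) - 1) ∂ν =
      ∫ s in Iic t, exp (ν.real (Iic s)) ∂ν - ν.real (Iic t) := by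
    simp [integral_sub hint (integrable_const 1)]
  have hle : ∫ s in Iic t, (exp (ν.real (Iic s)) - 1) ∂ν ≤
      exp (ν.real (Iic t)) - 1 - ν.real (Iic t) := by
    rw [integral_eq_lintegral_of_nonneg_ae (f := fun s => exp (ν.real (Iic s)) - 1)
      (ae_of_all _ fun s => by simp) (hcont.sub continuous_const).aestronglyMeasurable]
    exact ENNReal.toReal_le_of_le_ofReal (by linarith [add_one_le_exp (ν.real (Iic t))])
      (lintegral_exp_measureReal_Iic_sub_one_le ν t)
  linarith

end DistributionFunction

theorem add_mul_exp_sub_one_le {α a x M : ℝ} (hαa : α ≤ a) (hxM : x ≤ M) :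
    α + a * (exp x - 1) ≤ (α + (a - α) * (1 - exp (-M))) * exp x := by
  have hexp : exp (-M) * exp x ≤ 1 := by rw [← exp_add]; exact exp_le_one_iff.2 (by linarith)
  nlinarith [mul_nonneg (sub_nonneg.2 hαa) (sub_nonneg.2 hexp)]

section Gronwall

variable {μ ν : Measure ℝ} [IsFiniteMeasure ν] [NullSingletonClass ν] {p : ℝ → ℝ} {α : ℝ}

theorem ae_le_add_mul_exp_sub_one (hνμ : ν ≪ μ) (h : ∀ᵐ t ∂μ, p t ≤ α + ∫ s in Iic t, p s ∂ν)
    {a : ℝ} (ha : 0 ≤ a) (hpa : ∀ᵐ t ∂μ, p t ≤ a * exp (ν.real (Iic t))) :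
    ∀ᵐ t ∂μ, p t ≤ α + a * (exp (ν.real (Iic t)) - 1) := by
  filter_upwards [h] with t ht
  have hint := ((integrable_exp_measureReal_Iic ν).const_mul a).restrict (s := Iic t)
  have hmono : ∫ s in Iic t, p s ∂ν ≤ ∫ s in Iic t, a * exp (ν.real (Iic s)) ∂ν := by
    by_cases hp : Integrable p (ν.restrict (Iic t))
    · exact integral_mono_ae hp hint (ae_restrict_of_ae (hνμ.ae_le hpa))
    · rw [integral_undef hp]
      exact integral_nonneg fun s => by positivity
  calc p t ≤ α + ∫ s in Iic t, p s ∂ν := ht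
    _ ≤ α + a * ∫ s in Iic t, exp (ν.real (Iic s)) ∂ν := by rw [← integral_const_mul]; linarith
    _ ≤ α + a * (exp (ν.real (Iic t)) - 1) := by
        gcongr; exact setIntegral_exp_measureReal_Iic_le ν t

theorem ae_le_mul_exp_of_ae_le_add_setIntegral_Iic (hνμ : ν ≪ μ) (hα : 0 ≤ α) {C : ℝ}
    (hpC : ∀ᵐ t ∂μ, p t ≤ C) (h : ∀ᵐ t ∂μ, p t ≤ α + ∫ s in Iic t, p s ∂ν) :
    ∀ᵐ t ∂μ, p t ≤ α * exp (ν.real (Iic t)) := by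
  set θ := 1 - exp (-ν.real univ)
  have hθ0 : 0 ≤ θ := sub_nonneg.2 (exp_le_one_iff.2 (neg_nonpos.2 measureReal_nonneg))
  have hθ1 : θ < 1 := sub_lt_self _ (exp_pos _)
  set a : ℕ → ℝ := fun n => α + (max C α - α) * θ ^ n
  have hαa : ∀ n, α ≤ a n := fun n =>
    le_add_of_nonneg_right (mul_nonneg (sub_nonneg.2 (le_max_right _ _)) (pow_nonneg hθ0 n))
  have hbound : ∀ n, ∀ᵐ t ∂μ, p t ≤ a n * exp (ν.real (Iic t)) := by
    intro n
    induction n with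
    | zero =>
      filter_upwards [hpC] with t ht
      calc p t ≤ a 0 := by simp [a, ht]
        _ ≤ a 0 * exp (ν.real (Iic t)) :=
          le_mul_of_one_le_right (hα.trans (hαa 0)) (one_le_exp measureReal_nonneg)
    | succ n ih =>
      filter_upwards [ae_le_add_mul_exp_sub_one hνμ h (hα.trans (hαa n)) ih] with t ht
      calc p t ≤ α + a n * (exp (ν.real (Iic t)) - 1) := ht
        _ ≤ (α + (a n - α) * θ) * exp (ν.real (Iic t)) :=
          add_mul_exp_sub_one_le (hαa n) (measureReal_mono (subset_univ _))
        _ = a (n + 1) * exp (ν.real (Iic t)) := by simp only [a]; ring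
  have hlim : Tendsto a atTop (𝓝 α) := by
    simpa using
      ((tendsto_pow_atTop_nhds_zero_of_lt_one hθ0 hθ1).const_mul (max C α - α)).const_add α
  filter_upwards [ae_all_iff.2 hbound] with t ht
  exact ge_of_tendsto (hlim.mul_const _) (Eventually.of_forall ht)

end Gronwall

theorem setIntegral_Iic_withDensity_restrict_Icc {μ : Measure ℝ} {c : ℝ → ℝ} {T t : ℝ}
    (hc : AEMeasurable c μ) (hc0 : ∀ s ∈ Icc 0 T, 0 ≤ c s) (htT : t ≤ T) (f : ℝ → ℝ) :
    ∫ s in Iic t, f s ∂(μ.restrict (Icc 0 T)).withDensity (fun s => ENNReal.ofReal (c s)) =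
      ∫ s in Icc 0 t, c s * f s ∂μ := by
  have hIcc : Iic t ∩ Icc 0 T = Icc 0 t := by
    ext s; simp only [mem_inter_iff, mem_Iic, mem_Icc]; grind
  rw [restrict_withDensity measurableSet_Iic, Measure.restrict_restrict measurableSet_Iic, hIcc,
    integral_withDensity_eq_integral_toReal_smul₀ hc.restrict.ennreal_ofReal
      (ae_of_all _ fun _ => ENNReal.ofReal_lt_top)]
  refine setIntegral_congr_fun measurableSet_Icc fun s hs => ?_
  rw [ENNReal.toReal_ofReal (hc0 s ⟨hs.1, hs.2.trans htT⟩), smul_eq_mul]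

theorem gronwall_nonatomic_measure_general (T : ℝ)
    (μ : Measure ℝ) [IsFiniteMeasure μ]
    (hna : ∀ t : ℝ, μ {t} = 0)
    (c p : ℝ → ℝ) (hc : Integrable c μ)
    (hc0 : ∀ t ∈ Set.Icc 0 T, 0 ≤ c t)
    (hpb : ∃ C : ℝ, ∀ t ∈ Set.Icc 0 T, p t ≤ C)
    (α : ℝ) (hα : 0 ≤ α)
    (hineq : ∀ᵐ t ∂μ, t ∈ Set.Icc 0 T →
      p t ≤ α + ∫ s in Set.Icc 0 t, c s * p s ∂μ) :
    ∀ᵐ t ∂μ, t ∈ Set.Icc 0 T →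
      p t ≤ α * Real.exp (∫ s in Set.Icc 0 t, c s ∂μ) := by
  obtain ⟨C, hC⟩ := hpb
  have : NullSingletonClass μ := ⟨hna⟩
  set ν := (μ.restrict (Icc 0 T)).withDensity fun s => ENNReal.ofReal (c s)
  have : IsFiniteMeasure ν := isFiniteMeasure_withDensity_ofReal hc.restrict.hasFiniteIntegral
  have hν : ∀ t ∈ Icc 0 T, ∀ f : ℝ → ℝ, ∫ s in Iic t, f s ∂ν = ∫ s in Icc 0 t, c s * f s ∂μ :=
    fun t ht => setIntegral_Iic_withDensity_restrict_Icc hc.aemeasurable hc0 ht.2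
  have hpC : ∀ᵐ t ∂μ.restrict (Icc 0 T), p t ≤ C :=
    (ae_restrict_iff' measurableSet_Icc).2 (ae_of_all _ hC)
  have hineqν : ∀ᵐ t ∂μ.restrict (Icc 0 T), p t ≤ α + ∫ s in Iic t, p s ∂ν := by
    refine (ae_restrict_iff' measurableSet_Icc).2 ?_
    filter_upwards [hineq] with t ht htE
    rw [hν t htE]
    exact ht htE
  have hgronwall := ae_le_mul_exp_of_ae_le_add_setIntegral_Iic
    (withDensity_absolutelyContinuous _ _) hα hpC hineqν
  filter_upwards [(ae_restrict_iff' measurableSet_Icc).1 hgronwall] with t ht htE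
  have hνt : ν.real (Iic t) = ∫ s in Icc 0 t, c s ∂μ := by simpa using hν t htE 1
  rw [← hνt]
  exact ht htE

/-- Gronwall lemma for a non-atomic positive finite measure (Lemma 2.7). -/
theorem gronwall_nonatomic_measure (T : ℝ) (hT : 0 < T)
    (μ : Measure ℝ) [IsFiniteMeasure μ]
    (hna : ∀ t : ℝ, μ {t} = 0)
    (c p : ℝ → ℝ) (hc : Integrable c μ) (hpm : Measurable p)
    (hc0 : ∀ t ∈ Set.Icc 0 T, 0 ≤ c t) (hp0 : ∀ t ∈ Set.Icc 0 T, 0 ≤ p t)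
    (hpb : ∃ C : ℝ, ∀ t ∈ Set.Icc 0 T, p t ≤ C)
    (α : ℝ) (hα : 0 ≤ α)
    (hineq : ∀ᵐ t ∂μ, t ∈ Set.Icc 0 T →
      p t ≤ α + ∫ s in Set.Icc 0 t, c s * p s ∂μ) :
    ∀ᵐ t ∂μ, t ∈ Set.Icc 0 T →
      p t ≤ α * Real.exp (∫ s in Set.Icc 0 t, c s ∂μ) :=
  gronwall_nonatomic_measure_general T μ hna c p hc hc0 hpb α hα hineq
end

section
/- Let $u_i^n$, $i = 0,\dots,k_n$, be defined by the catching-up scheme $u_{i+1}^n = J_{\beta_{i+1}^n}^{A(t_{i+1}^n)}\big(u_i^n - \int_{t_i^n}^{t_{i+1}^n} f\,d\lambda\big)$, where $A(t)$ are maximal monotone operators satisfying $dis(A(t),A(s)) \leq r(t)-r(s)$ for $s \leq t$ and $\|A^0(t,x)\| \leq c(1+\|x\|)$, $\|f\| \leq M$, and $\beta_{i+1}^n = \nu((t_i^n, t_{i+1}^n])$ with $\nu = \lambda + dr$. Then $\|u_{i+1}^n - u_i^n\| \leq (2c\|u_i^n\| + 2(1+c) + M)\beta_{i+1}^n$, provided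 $\beta_{i+1}^n \leq 1$. -/
open MeasureTheory intervalIntegral
open scoped RealInnerProductSpace

variable {E : Type*} [NormedAddCommGroup E] [InnerProductSpace ℝ E]

set_option maxHeartbeats 1000000

/-- One-step estimate for the catching-up algorithm (relation (3.8) in the paper). -/
theorem catching_up_step_estimate
    [TopologicalSpace.SeparableSpace E] [CompleteSpace E]
    (T : ℝ) (hT : 0 < T)
    (A : ℝ → E → Set E) (hA : ∀ t, IsMaximalMonotone (A t))
    (r : ℝ → ℝ) (hr : MonotoneOn r (Set.Icc 0 T))
    (hdis : ∀ s t : ℝ, 0 ≤ s → s ≤ t → t ≤ T → ∀ x y x' y' : E,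
      y ∈ A s x → y' ∈ A t x' →
      (⟪y - y', x' - x⟫ : ℝ) ≤ (r t - r s) * (1 + ‖y‖ + ‖y'‖))
    (A0 : ℝ → E → E)
    (hA0 : ∀ t x, (A t x).Nonempty → A0 t x ∈ A t x ∧ ∀ w ∈ A t x, ‖A0 t x‖ ≤ ‖w‖)
    (c : ℝ) (hc : 0 ≤ c)
    (hgrowth : ∀ t ∈ Set.Icc (0 : ℝ) T, ∀ x : E,
      (A t x).Nonempty → ‖A0 t x‖ ≤ c * (1 + ‖x‖))
    (f : ℝ → E) (hfm : StronglyMeasurable f) (M : ℝ) (hM : 0 ≤ M)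
    (hfb : ∀ t, ‖f t‖ ≤ M)
    (ti ti1 : ℝ) (hti : 0 ≤ ti) (htt : ti ≤ ti1) (hti1 : ti1 ≤ T)
    (β : ℝ) (hβ : β = (ti1 - ti) + (r ti1 - r ti)) (hβpos : 0 < β) (hβ1 : β ≤ 1)
    (J : E → E) (hJ : ∀ x : E, ∃ y ∈ A ti1 (J x), x = J x + β • y)
    (ui : E) (hui : (A ti ui).Nonempty)
    (ui1 : E) (hui1 : ui1 = J (ui - ∫ s in ti..ti1, f s)) :
    ‖ui1 - ui‖ ≤ (2 * c * ‖ui‖ + 2 * (1 + c) + M) * β := by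

  have hρ : 0 ≤ r ti1 - r ti :=
    sub_nonneg.2 (hr ⟨hti, htt.trans hti1⟩ ⟨hti.trans htt, hti1⟩ htt)
  have hβ' : ti1 - ti ≤ β := by rw [hβ]; linarith
  have hρβ : r ti1 - r ti ≤ β := by rw [hβ]; linarith
  set g := ∫ s in ti..ti1, f s with hg
  have hgnorm : ‖g‖ ≤ M * β := by
    have h1 : ‖g‖ ≤ M * |ti1 - ti| :=
      intervalIntegral.norm_integral_le_of_norm_le_const (fun x _ => hfb x)
    rw [abs_of_nonneg (by linarith)] at h1
    have h2 : M * (ti1 - ti) ≤ M * β := mul_le_mul_of_nonneg_left hβ' hM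
    linarith
  have nonexp : ∀ x x' : E, ‖J x - J x'‖ ≤ ‖x - x'‖ := by
    intro x x'
    obtain ⟨y, hy, hxe⟩ := hJ x
    obtain ⟨y', hy', hxe'⟩ := hJ x'
    have hmono : (0:ℝ) ≤ ⟪y - y', J x - J x'⟫ := (hA ti1).1 hy hy'
    have hdecomp : x - x' = (J x - J x') + β • (y - y') := by
      conv_lhs => rw [hxe, hxe']
      rw [smul_sub]; abel
    have hsq : ‖J x - J x'‖ ^ 2 ≤ ‖x - x'‖ ^ 2 := by
      rw [hdecomp, norm_add_sq_real]
      have hin : ⟪J x - J x', β • (y - y')⟫ = β * ⟪y - y', J x - J x'⟫ := by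
        rw [real_inner_smul_right, real_inner_comm]
      nlinarith [sq_nonneg (‖β • (y - y')‖), mul_nonneg hβpos.le hmono]
    nlinarith [norm_nonneg (x - x'), norm_nonneg (J x - J x'), hsq]
  obtain ⟨y', hy'A, hy'eq⟩ := hJ ui
  set v := J ui with hv
  have hvui : v - ui = -(β • y') := by rw [hy'eq]; abel
  have hvnorm : ‖v - ui‖ = β * ‖y'‖ := by
    rw [hvui, norm_neg, norm_smul, Real.norm_of_nonneg hβpos.le]
  obtain ⟨hy1A, -⟩ := hA0 ti ui hui
  set b := ‖A0 ti ui‖ with hbdef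
  have hbnn : 0 ≤ b := norm_nonneg _
  have hb : b ≤ c * (1 + ‖ui‖) := hgrowth ti ⟨hti, htt.trans hti1⟩ ui hui
  have hdis' := hdis ti ti1 hti htt hti1 ui (A0 ti ui) v y' hy1A hy'A
  rw [inner_sub_left] at hdis'
  have hinner : ⟪y', v - ui⟫ = -(β * ‖y'‖ ^ 2) := by
    rw [hvui, inner_neg_right, real_inner_smul_right, real_inner_self_eq_norm_sq]
  have hlow : -(b * (β * ‖y'‖)) ≤ ⟪A0 ti ui, v - ui⟫ := by
    have h1 := abs_real_inner_le_norm (A0 ti ui) (v - ui)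
    rw [hvnorm] at h1
    have h2 := neg_abs_le (⟪A0 ti ui, v - ui⟫ : ℝ)
    linarith
  have hrhs : (r ti1 - r ti) * (1 + b + ‖y'‖) ≤ β * (1 + b + ‖y'‖) :=
    mul_le_mul_of_nonneg_right hρβ (by positivity)
  have key : β * ‖y'‖ ^ 2 ≤ β * (b * ‖y'‖ + (1 + b + ‖y'‖)) := by nlinarith
  have h2 : ‖y'‖ ^ 2 ≤ b * ‖y'‖ + (1 + b + ‖y'‖) := le_of_mul_le_mul_left key hβpos
  have ha : ‖y'‖ ≤ 2 * (b + 1) := by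
    nlinarith [norm_nonneg y', hbnn, h2, mul_nonneg hbnn (norm_nonneg y')]
  have hstep1 : ‖ui1 - v‖ ≤ M * β := by
    rw [hui1, hv]
    calc ‖J (ui - g) - J ui‖ ≤ ‖(ui - g) - ui‖ := nonexp _ _
      _ = ‖g‖ := by rw [show ui - g - ui = -g by abel, norm_neg]
      _ ≤ M * β := hgnorm
  have hstep2 : ‖v - ui‖ ≤ (2 * c * ‖ui‖ + 2 * (1 + c)) * β := by
    rw [hvnorm]
    have hy'b : ‖y'‖ ≤ 2 * c * ‖ui‖ + 2 * (1 + c) := by linarith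
    calc β * ‖y'‖ ≤ β * (2 * c * ‖ui‖ + 2 * (1 + c)) :=
          mul_le_mul_of_nonneg_left hy'b hβpos.le
      _ = (2 * c * ‖ui‖ + 2 * (1 + c)) * β := mul_comm _ _
  have htri : ‖ui1 - ui‖ ≤ ‖ui1 - v‖ + ‖v - ui‖ := norm_sub_le_norm_sub_add_norm_sub _ _ _
  nlinarith [htri, hstep1, hstep2]
end
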